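/- arXiv:1507.07055 — 2 statements merged into one kernel-verified Lean document; each statement's English description precedes it below -/
import Mathlib

section
/- Let $J_N$ be a symmetric $N\times N$ real matrix with zero diagonal and non-negative entries, with eigenvalues $\lambda_1(J_N)\le\cdots\le\lambda_N(J_N)$, and let $F_N(\beta)=\log(2^{-N}\sum_{\tau\in\{-1,1\}^N}e^{\frac12\beta\tau'J_N\tau})$. Then for all $0<\beta<1/\|J_N\|$ (operator norm), $F_N(\beta)\le -\frac12\sum_{i=1}^N\log(1-\beta\lambda_i(J_N))$. -/
/-!
Conditionally on the other spins, `τ'Jτ` is affine in each `τᵢ` because `J` has zero diagonal, and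
against an affine exponent a uniform sign is dominated by a standard Gaussian:
`E exp (a τ) = cosh a ≤ exp (a² / 2) = E exp (a g)`. Replacing the spins by Gaussians one coordinate
at a time bounds the spin average by `E exp (β g'Jg / 2)`. By rotation invariance of the standard
Gaussian this is a product over the eigenvalues of chi-squared moment generating functions
`E exp (β λ g² / 2) = (1 - β λ)^(-1/2)`.
-/

open Real Finset

/-- Spin value of a Boolean: `true ↦ 1`, `false ↦ -1`. -/
noncomputable def spin (b : Bool) : ℝ := if b then 1 else -1

/-- The ℓ² operator norm of a real matrix. -/
noncomputable def opNorm {N : ℕ} (J : Matrix (Fin N) (Fin N) ℝ) : ℝ :=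
  ‖Matrix.toEuclideanCLM (𝕜 := ℝ) J‖

/-- The quadratic form τ'Jτ. -/
noncomputable def quadForm {N : ℕ} (J : Matrix (Fin N) (Fin N) ℝ) (τ : Fin N → Bool) : ℝ :=
  ∑ i, ∑ j, J i j * spin (τ i) * spin (τ j)

/-- Log-partition function `F_N(β) = log(2^{-N} ∑_τ exp(β τ'Jτ / 2))`. -/
noncomputable def logPartition {N : ℕ} (J : Matrix (Fin N) (Fin N) ℝ) (β : ℝ) : ℝ :=
  Real.log ((2 : ℝ)⁻¹ ^ N * ∑ τ : Fin N → Bool, Real.exp (β / 2 * quadForm J τ))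

open MeasureTheory ProbabilityTheory
open scoped ENNReal Matrix

section Comparison

variable {α : Type*} [MeasurableSpace α]

lemma measurable_fin_cons {n : ℕ} :
    Measurable fun p : α × (Fin n → α) ↦ (Fin.cons p.1 p.2 : Fin (n + 1) → α) :=
  measurable_pi_iff.2 <| Fin.cases measurable_fst fun i ↦ (measurable_pi_apply i).comp measurable_snd

lemma lintegral_pi_fin_succ {n : ℕ} (μ : Measure α) [SigmaFinite μ]
    {F : (Fin (n + 1) → α) → ℝ≥0∞} (hF : Measurable F) :
    ∫⁻ x, F x ∂Measure.pi (fun _ ↦ μ) =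
      ∫⁻ y, ∫⁻ z, F (Fin.cons y z) ∂Measure.pi (fun _ ↦ μ) ∂μ := by
  have e := (measurePreserving_piFinSuccAbove (fun _ : Fin (n + 1) ↦ μ) 0).symm
  rw [← e.lintegral_comp hF]
  refine (lintegral_prod _ (hF.comp e.measurable).aemeasurable).trans ?_
  simp only [MeasurableEquiv.piFinSuccAbove_symm_apply, Fin.insertNthEquiv_zero]
  rfl

theorem lintegral_pi_le_of_lintegral_update_le {μ ν : Measure α} [SigmaFinite μ] [SigmaFinite ν] :
    ∀ {n : ℕ} {F : (Fin n → α) → ℝ≥0∞}, Measurable F →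
      (∀ i x, ∫⁻ y, F (Function.update x i y) ∂μ ≤ ∫⁻ y, F (Function.update x i y) ∂ν) →
      ∫⁻ x, F x ∂Measure.pi (fun _ ↦ μ) ≤ ∫⁻ x, F x ∂Measure.pi (fun _ ↦ ν)
  | 0, F, _, _ => by simp [lintegral_unique]
  | n + 1, F, hF, hsec => by
    have hcons := hF.comp (measurable_fin_cons (n := n))
    calc ∫⁻ x, F x ∂Measure.pi (fun _ ↦ μ)
        = ∫⁻ y, ∫⁻ z, F (Fin.cons y z) ∂Measure.pi (fun _ ↦ μ) ∂μ := lintegral_pi_fin_succ μ hF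
      _ ≤ ∫⁻ y, ∫⁻ z, F (Fin.cons y z) ∂Measure.pi (fun _ ↦ ν) ∂μ := by
        refine lintegral_mono fun y ↦ lintegral_pi_le_of_lintegral_update_le
          (hcons.comp measurable_prodMk_left) fun i z ↦ ?_
        simpa only [Fin.cons_update] using hsec i.succ (Fin.cons y z)
      _ = ∫⁻ z, ∫⁻ y, F (Fin.cons y z) ∂μ ∂Measure.pi (fun _ ↦ ν) :=
        lintegral_lintegral_swap hcons.aemeasurable
      _ ≤ ∫⁻ z, ∫⁻ y, F (Fin.cons y z) ∂ν ∂Measure.pi (fun _ ↦ ν) := by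
        refine lintegral_mono fun z ↦ ?_
        rcases isEmpty_or_nonempty α with _ | ⟨⟨a⟩⟩
        · simp
        · simpa only [Fin.update_cons_zero] using hsec 0 (Fin.cons a z)
      _ = ∫⁻ x, F x ∂Measure.pi (fun _ ↦ ν) :=
        (lintegral_lintegral_swap (f := fun y z ↦ F (Fin.cons y z)) hcons.aemeasurable).symm.trans
          (lintegral_pi_fin_succ ν hF).symm

end Comparison

lemma lintegral_pi_prod_eq_prod {ι : Type*} [Fintype ι] {α : ι → Type*}
    [∀ i, MeasurableSpace (α i)] {μ : ∀ i, Measure (α i)} [∀ i, IsProbabilityMeasure (μ i)]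
    {f : ∀ i, α i → ℝ≥0∞} (hf : ∀ i, Measurable (f i)) :
    ∫⁻ x, ∏ i, f i (x i) ∂Measure.pi μ = ∏ i, ∫⁻ t, f i t ∂μ i := by
  rw [lintegral_prod_eq_prod_lintegral_of_indepFun _ _ (iIndepFun_pi fun i ↦ (hf i).aemeasurable)
    fun i ↦ (hf i).comp (measurable_pi_apply i)]
  exact prod_congr rfl fun i _ ↦ (measurePreserving_eval μ i).lintegral_comp (hf i)

noncomputable def rademacher : Measure ℝ := (PMF.uniformOfFintype Bool).toMeasure.map spin

lemma measurable_spin : Measurable spin := .of_discrete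

instance : IsProbabilityMeasure rademacher :=
  Measure.isProbabilityMeasure_map measurable_spin.aemeasurable

lemma lintegral_rademacher {f : ℝ → ℝ≥0∞} (hf : Measurable f) :
    ∫⁻ t, f t ∂rademacher = 2⁻¹ * (f 1 + f (-1)) := by
  rw [rademacher, lintegral_map hf measurable_spin, lintegral_fintype]
  simp [spin, mul_comm, mul_add]

lemma lintegral_pi_rademacher {ι : Type*} [Fintype ι] [DecidableEq ι]
    {F : (ι → ℝ) → ℝ≥0∞} (hF : Measurable F) :
    ∫⁻ x, F x ∂Measure.pi (fun _ : ι ↦ rademacher) =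
      2⁻¹ ^ Fintype.card ι * ∑ τ : ι → Bool, F (fun i ↦ spin (τ i)) := by
  rw [rademacher, ← Measure.pi_map_pi fun _ ↦ measurable_spin.aemeasurable,
    lintegral_map hF .of_discrete, lintegral_fintype, mul_sum]
  simp [mul_comm]

lemma lintegral_exp_rademacher (a b : ℝ) :
    ∫⁻ t, ENNReal.ofReal (exp (a * t + b)) ∂rademacher = ENNReal.ofReal (exp b * cosh a) := by
  rw [lintegral_rademacher (by fun_prop), ← ENNReal.ofReal_add (by positivity) (by positivity),
    ← ENNReal.ofReal_ofNat 2, ← ENNReal.ofReal_inv_of_pos two_pos,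
    ← ENNReal.ofReal_mul (by norm_num), cosh_eq]
  congr 1
  rw [mul_one, mul_neg_one, exp_add, exp_add]
  ring

lemma lintegral_exp_gaussianReal (a b : ℝ) :
    ∫⁻ t, ENNReal.ofReal (exp (a * t + b)) ∂gaussianReal 0 1 =
      ENNReal.ofReal (exp b * exp (a ^ 2 / 2)) := by
  have hmgf := congrFun (mgf_id_gaussianReal (μ := 0) (v := 1)) a
  simp only [mgf, id, zero_mul, zero_add, NNReal.coe_one, one_mul] at hmgf
  simp_rw [exp_add]
  rw [← ofReal_integral_eq_lintegral_ofReal ((integrable_exp_mul_gaussianReal a).mul_const _)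
    (ae_of_all _ fun _ ↦ by positivity), integral_mul_const, hmgf, mul_comm]

lemma lintegral_exp_rademacher_le_gaussianReal (a b : ℝ) :
    ∫⁻ t, ENNReal.ofReal (exp (a * t + b)) ∂rademacher ≤
      ∫⁻ t, ENNReal.ofReal (exp (a * t + b)) ∂gaussianReal 0 1 := by
  rw [lintegral_exp_rademacher, lintegral_exp_gaussianReal]
  exact ENNReal.ofReal_le_ofReal
    (mul_le_mul_of_nonneg_left (cosh_le_exp_half_sq a) (exp_pos b).le)

lemma lintegral_exp_mul_sq_gaussianReal {s : ℝ} (hs : s < 1) :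
    ∫⁻ t, ENNReal.ofReal (exp (s / 2 * t ^ 2)) ∂gaussianReal 0 1 =
      ENNReal.ofReal (√(1 - s))⁻¹ := by
  have hb : 0 < (1 - s) / 2 := by linarith
  have hdensity : ∀ t, gaussianPDF 0 1 t * ENNReal.ofReal (exp (s / 2 * t ^ 2)) =
      ENNReal.ofReal ((√(2 * π))⁻¹ * exp (-((1 - s) / 2) * t ^ 2)) := fun t ↦ by
    rw [gaussianPDF_def, gaussianPDFReal_def, ← ENNReal.ofReal_mul (by positivity), mul_assoc,
      ← exp_add, NNReal.coe_one, mul_one]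
    congr 3
    ring
  rw [gaussianReal_of_var_ne_zero _ one_ne_zero,
    lintegral_withDensity_eq_lintegral_mul _ (measurable_gaussianPDF 0 1) (by fun_prop)]
  simp only [Pi.mul_apply, hdensity]
  rw [← ofReal_integral_eq_lintegral_ofReal ((integrable_exp_neg_mul_sq hb).const_mul _)
      (ae_of_all _ fun _ ↦ by positivity), integral_const_mul, integral_gaussian,
    show π / ((1 - s) / 2) = 2 * π / (1 - s) by field_simp, sqrt_div' _ (by linarith : 0 ≤ 1 - s)]
  have : 0 < √(2 * π) := by positivity
  congr 1
  field_simp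

section QuadraticForm

variable {ι : Type*} [Fintype ι] [DecidableEq ι]

lemma Matrix.IsSymm.dotProduct_mulVec_update {R : Type*} [CommRing R] {J : Matrix ι ι R}
    (hJ : J.IsSymm) (hdiag : ∀ i, J i i = 0) (x : ι → R) (i : ι) (t : R) :
    Function.update x i t ⬝ᵥ J *ᵥ Function.update x i t =
      2 * (J *ᵥ Function.update x i 0) i * t +
        Function.update x i 0 ⬝ᵥ J *ᵥ Function.update x i 0 := by
  set w := Function.update x i 0
  have hsplit : Function.update x i t = w + Pi.single i t := by
    ext j
    rcases eq_or_ne j i with rfl | h <;> simp [w, *]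
  have hcross : w ⬝ᵥ J *ᵥ Pi.single i t = (J *ᵥ w) i * t := by
    rw [dotProduct_mulVec, ← Matrix.mulVec_transpose, hJ.eq, dotProduct_single]
  rw [hsplit, Matrix.mulVec_add, dotProduct_add, add_dotProduct, add_dotProduct, hcross,
    single_dotProduct, single_dotProduct, Matrix.mulVec_single]
  simp [hdiag]
  ring

lemma Matrix.IsHermitian.dotProduct_mulVec_sum_smul_eigenvectorBasis {A : Matrix ι ι ℝ}
    (hA : A.IsHermitian) (y : ι → ℝ) :
    (∑ k, y k • ⇑(hA.eigenvectorBasis k)) ⬝ᵥ A *ᵥ (∑ k, y k • ⇑(hA.eigenvectorBasis k)) =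
      ∑ k, hA.eigenvalues k * y k ^ 2 := by
  have hmul : A *ᵥ (∑ k, y k • ⇑(hA.eigenvectorBasis k)) =
      ∑ k, (hA.eigenvalues k * y k) • ⇑(hA.eigenvectorBasis k) := by
    simp [Matrix.mulVec_sum, Matrix.mulVec_smul, hA.mulVec_eigenvectorBasis, smul_smul, mul_comm]
  rw [hmul, dotProduct_comm]
  have := hA.eigenvectorBasis.orthonormal.inner_sum y (fun k ↦ hA.eigenvalues k * y k) univ
  simp only [EuclideanSpace.inner_eq_star_dotProduct, star_trivial, conj_trivial,
    WithLp.ofLp_sum, WithLp.ofLp_smul] at this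
  rw [this]
  exact sum_congr rfl fun k _ ↦ by ring

lemma Matrix.IsHermitian.eigenvalues_le_norm_toEuclideanCLM {A : Matrix ι ι ℝ}
    (hA : A.IsHermitian) (k : ι) :
    hA.eigenvalues k ≤ ‖Matrix.toEuclideanCLM (𝕜 := ℝ) A‖ := by
  have heigen : Matrix.toEuclideanCLM (𝕜 := ℝ) A (hA.eigenvectorBasis k) =
      hA.eigenvalues k • hA.eigenvectorBasis k := by
    apply WithLp.ofLp_injective
    rw [Matrix.ofLp_toEuclideanCLM, hA.mulVec_eigenvectorBasis k, WithLp.ofLp_smul]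
  have h := (Matrix.toEuclideanCLM (𝕜 := ℝ) A).le_opNorm (hA.eigenvectorBasis k)
  rw [heigen, norm_smul, hA.eigenvectorBasis.orthonormal.1 k, mul_one, mul_one,
    Real.norm_eq_abs] at h
  exact (le_abs_self _).trans h

lemma lintegral_exp_dotProduct_mulVec_pi_gaussianReal {A : Matrix ι ι ℝ} (hA : A.IsHermitian)
    {s : ℝ} (hs : ∀ k, s * hA.eigenvalues k < 1) :
    ∫⁻ x, ENNReal.ofReal (exp (s / 2 * (x ⬝ᵥ A *ᵥ x))) ∂Measure.pi (fun _ : ι ↦ gaussianReal 0 1) =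
      ∏ k, ENNReal.ofReal (√(1 - s * hA.eigenvalues k))⁻¹ := by
  set G : (ι → ℝ) → ℝ≥0∞ := fun x ↦ ENNReal.ofReal (exp (s / 2 * (x ⬝ᵥ A *ᵥ x)))
  have hG : Measurable G := by unfold G; fun_prop
  have hcoord : ∀ y : ι → ℝ, G (WithLp.ofLp (∑ k, y k • hA.eigenvectorBasis k)) =
      ∏ k, ENNReal.ofReal (exp (s * hA.eigenvalues k / 2 * y k ^ 2)) := fun y ↦ by
    simp only [G, WithLp.ofLp_sum, WithLp.ofLp_smul]
    rw [hA.dotProduct_mulVec_sum_smul_eigenvectorBasis, mul_sum, ← ENNReal.ofReal_prod_of_nonneg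
      (fun k _ ↦ (exp_pos _).le), ← exp_sum]
    congr 2
    exact sum_congr rfl fun k _ ↦ by ring
  calc ∫⁻ x, G x ∂Measure.pi (fun _ : ι ↦ gaussianReal 0 1)
      = ∫⁻ v, G (WithLp.ofLp v) ∂stdGaussian (EuclideanSpace ℝ ι) := by
        rw [← map_pi_eq_stdGaussian, lintegral_map (f := fun v ↦ G (WithLp.ofLp v))
          (hG.comp (by fun_prop)) (by fun_prop)]
    _ = ∫⁻ y, G (WithLp.ofLp (∑ k, y k • hA.eigenvectorBasis k))
          ∂Measure.pi (fun _ : ι ↦ gaussianReal 0 1) := by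
        rw [stdGaussian_eq_map_pi_orthonormalBasis hA.eigenvectorBasis,
          lintegral_map (f := fun v ↦ G (WithLp.ofLp v)) (hG.comp (by fun_prop)) (by fun_prop)]
    _ = ∏ k, ∫⁻ t, ENNReal.ofReal (exp (s * hA.eigenvalues k / 2 * t ^ 2)) ∂gaussianReal 0 1 := by
        simp only [hcoord]
        exact lintegral_pi_prod_eq_prod
          (f := fun k t ↦ ENNReal.ofReal (exp (s * hA.eigenvalues k / 2 * t ^ 2))) fun k ↦ by fun_prop
    _ = ∏ k, ENNReal.ofReal (√(1 - s * hA.eigenvalues k))⁻¹ :=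
        prod_congr rfl fun k _ ↦ lintegral_exp_mul_sq_gaussianReal (hs k)

end QuadraticForm

lemma lintegral_exp_dotProduct_mulVec_pi_rademacher_le {n : ℕ} {J : Matrix (Fin n) (Fin n) ℝ}
    (hJ : J.IsSymm) (hdiag : ∀ i, J i i = 0) (β : ℝ) :
    ∫⁻ x, ENNReal.ofReal (exp (β / 2 * (x ⬝ᵥ J *ᵥ x))) ∂Measure.pi (fun _ ↦ rademacher) ≤
      ∫⁻ x, ENNReal.ofReal (exp (β / 2 * (x ⬝ᵥ J *ᵥ x))) ∂Measure.pi (fun _ ↦ gaussianReal 0 1) := by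
  refine lintegral_pi_le_of_lintegral_update_le (by fun_prop) fun i x ↦ ?_
  have haffine : ∀ t, β / 2 * (Function.update x i t ⬝ᵥ J *ᵥ Function.update x i t) =
      β * (J *ᵥ Function.update x i 0) i * t +
        β / 2 * (Function.update x i 0 ⬝ᵥ J *ᵥ Function.update x i 0) := fun t ↦ by
    rw [hJ.dotProduct_mulVec_update hdiag]
    ring
  simpa only [← haffine] using lintegral_exp_rademacher_le_gaussianReal
    (β * (J *ᵥ Function.update x i 0) i)
    (β / 2 * (Function.update x i 0 ⬝ᵥ J *ᵥ Function.update x i 0))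

lemma quadForm_eq_dotProduct_mulVec {N : ℕ} (J : Matrix (Fin N) (Fin N) ℝ) (τ : Fin N → Bool) :
    quadForm J τ = (fun i ↦ spin (τ i)) ⬝ᵥ J *ᵥ fun i ↦ spin (τ i) := by
  simp only [quadForm, dotProduct, Matrix.mulVec, mul_sum]
  exact sum_congr rfl fun i _ ↦ sum_congr rfl fun j _ ↦ by ring

theorem inv_two_pow_mul_sum_exp_quadForm_le {N : ℕ} {J : Matrix (Fin N) (Fin N) ℝ}
    (hJ : J.IsHermitian) (hdiag : ∀ i, J i i = 0) {β : ℝ} (hβ : ∀ k, β * hJ.eigenvalues k < 1) :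
    (2 : ℝ)⁻¹ ^ N * ∑ τ : Fin N → Bool, exp (β / 2 * quadForm J τ) ≤
      ∏ k, (√(1 - β * hJ.eigenvalues k))⁻¹ := by
  have hcmp := lintegral_exp_dotProduct_mulVec_pi_rademacher_le
    (Matrix.isHermitian_iff_isSymm.mp hJ) hdiag β
  rw [lintegral_pi_rademacher (by fun_prop), lintegral_exp_dotProduct_mulVec_pi_gaussianReal hJ hβ,
    ← ENNReal.ofReal_prod_of_nonneg fun k _ ↦ by positivity] at hcmp
  refine (ENNReal.ofReal_le_ofReal_iff (by positivity)).mp (le_of_eq_of_le ?_ hcmp)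
  rw [ENNReal.ofReal_mul (by positivity), ENNReal.ofReal_pow (by positivity),
    ENNReal.ofReal_inv_of_pos two_pos, ENNReal.ofReal_ofNat, Fintype.card_fin,
    ENNReal.ofReal_sum_of_nonneg fun τ _ ↦ (exp_pos _).le]
  simp only [quadForm_eq_dotProduct_mulVec]

theorem stmt0_general {N : ℕ} (J : Matrix (Fin N) (Fin N) ℝ) (hJ : J.IsHermitian)
    (hdiag : ∀ i, J i i = 0)
    (β : ℝ) (hβ0 : 0 < β) (hβ : β < 1 / opNorm J) :
    logPartition J β ≤ - (1 / 2) * ∑ i, Real.log (1 - β * hJ.eigenvalues i) := by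
  have hβJ : β * opNorm J < 1 := by
    rcases (show 0 ≤ opNorm J from norm_nonneg _).lt_or_eq with hpos | hzero
    · rw [lt_div_iff₀ hpos] at hβ
      linarith
    · rw [← hzero, mul_zero]
      exact one_pos
  have hev : ∀ k, 0 < 1 - β * hJ.eigenvalues k := fun k ↦ by
    have : hJ.eigenvalues k ≤ opNorm J := hJ.eigenvalues_le_norm_toEuclideanCLM k
    nlinarith
  have hZ : 0 < (2 : ℝ)⁻¹ ^ N * ∑ τ : Fin N → Bool, exp (β / 2 * quadForm J τ) :=
    mul_pos (by positivity) (sum_pos (fun τ _ ↦ exp_pos _) univ_nonempty)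
  calc logPartition J β
      ≤ Real.log (∏ k, (√(1 - β * hJ.eigenvalues k))⁻¹) :=
        Real.log_le_log hZ (inv_two_pow_mul_sum_exp_quadForm_le hJ hdiag fun k ↦ by linarith [hev k])
    _ = - (1 / 2) * ∑ k, Real.log (1 - β * hJ.eigenvalues k) := by
        rw [Real.log_prod fun k _ ↦ (inv_pos.2 (sqrt_pos.2 (hev k))).ne', mul_sum]
        refine sum_congr rfl fun k _ ↦ ?_
        rw [Real.log_inv, Real.log_sqrt (hev k).le]
        ring

theorem stmt0 {N : ℕ} (J : Matrix (Fin N) (Fin N) ℝ) (hJ : J.IsHermitian)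
    (hdiag : ∀ i, J i i = 0) (hpos : ∀ i j, 0 ≤ J i j)
    (β : ℝ) (hβ0 : 0 < β) (hβ : β < 1 / opNorm J) :
    logPartition J β ≤ - (1 / 2) * ∑ i, Real.log (1 - β * hJ.eigenvalues i) :=
  stmt0_general J hJ hdiag β hβ0 hβ
end

section
/- Let $J_N$ be a symmetric $N\times N$ real matrix with zero diagonal and non-negative entries, and $F_N(\beta)=\log(2^{-N}\sum_{\tau\in\{-1,1\}^N}e^{\frac12\beta\tau'J_N\tau})$. Then for every $\beta>0$, $F_N(\beta)\ge \sum_{1\le i<j\le N}\log\cosh(\beta J_N(i,j))$. -/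
/-!
Since $\tau_i\tau_j = \pm 1$, $e^{x\tau_i\tau_j} = \cosh x\,(1 + \tanh x\,\tau_i\tau_j)$, so
$$2^N e^{F_N(\beta)} = \prod_{i<j}\cosh(\beta J_{ij})
  \cdot \sum_\tau \prod_{i<j}(1 + t_{ij}\tau_i\tau_j), \qquad t_{ij} = \tanh(\beta J_{ij}) \ge 0.$$
Expanding the product over the sets $B$ of pairs, every coefficient $\prod_B t_{ij}$ is
non-negative, and so is every spin sum $\sum_\tau \prod_B \tau_i\tau_j$: it factors over the
sites into sums $\sum_b (\pm 1)^{\deg}$. Hence the sum over $\tau$ is at least its $B = \emptyset$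
term, $2^N$.
-/

open Real Finset

lemma Finset.sum_sum_eq_two_nsmul_sum_lt {ι M : Type*} [Fintype ι] [LinearOrder ι]
    [AddCommMonoid M] (f : ι → ι → M) (hsymm : ∀ i j, f i j = f j i) (hdiag : ∀ i, f i i = 0) :
    ∑ i, ∑ j, f i j = 2 • ∑ p ∈ univ.filter (fun p : ι × ι => p.1 < p.2), f p.1 p.2 := by
  calc ∑ i, ∑ j, f i j
      = ∑ i, ∑ j, ((if i < j then f i j else 0) + if j < i then f j i else 0) := by
        refine sum_congr rfl fun i _ => sum_congr rfl fun j _ => ?_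
        rcases lt_trichotomy i j with h | rfl | h
        · simp [h, h.not_gt]
        · simp [hdiag]
        · simp [h, h.not_gt, hsymm i j]
    _ = 2 • ∑ i, ∑ j, if i < j then f i j else 0 := by
        simp only [sum_add_distrib]
        rw [sum_comm (f := fun i j => if j < i then f j i else 0), two_nsmul]
    _ = _ := by rw [sum_filter, Fintype.sum_prod_type]

lemma spin_mul_spin_eq_one_or_eq_neg_one (a b : Bool) :
    spin a * spin b = 1 ∨ spin a * spin b = -1 := by
  cases a <;> cases b <;> norm_num [spin]

lemma sum_spin_pow_nonneg (n : ℕ) : 0 ≤ ∑ b : Bool, spin b ^ n := by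
  rcases n.even_or_odd with h | h <;> simp [spin, h.neg_one_pow]

lemma sum_prod_spin_pow_nonneg {ι : Type*} [Fintype ι] [DecidableEq ι] (n : ι → ℕ) :
    0 ≤ ∑ τ : ι → Bool, ∏ i, spin (τ i) ^ n i := by
  rw [← Fintype.prod_sum (fun i b => spin b ^ n i)]
  exact prod_nonneg fun i _ => sum_spin_pow_nonneg (n i)

lemma Finset.prod_comp_eq_prod_univ_pow {α ι M : Type*} [Fintype ι] [DecidableEq ι]
    [CommMonoid M] (s : Finset α) (f : ι → M) (g : α → ι) :
    ∏ a ∈ s, f (g a) = ∏ i, f i ^ #{a ∈ s | g a = i} := by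
  rw [← prod_fiberwise' s g f]
  exact prod_congr rfl fun i _ => prod_const _

lemma sum_prod_spin_mul_spin_nonneg {ι : Type*} [Fintype ι] [DecidableEq ι]
    (A : Finset (ι × ι)) :
    0 ≤ ∑ τ : ι → Bool, ∏ p ∈ A, spin (τ p.1) * spin (τ p.2) := by
  have hdeg : ∀ τ : ι → Bool, ∏ p ∈ A, spin (τ p.1) * spin (τ p.2) =
      ∏ i, spin (τ i) ^ (#{p ∈ A | p.1 = i} + #{p ∈ A | p.2 = i}) := fun τ => by
    simp only [prod_mul_distrib, pow_add,
      prod_comp_eq_prod_univ_pow A (fun i => spin (τ i))]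
  simpa only [hdeg] using sum_prod_spin_pow_nonneg _

lemma Real.exp_mul_eq_cosh_mul_one_add_tanh_mul {s : ℝ} (hs : s = 1 ∨ s = -1) (x : ℝ) :
    exp (x * s) = cosh x * (1 + tanh x * s) := by
  have hcosh : cosh x * (1 + tanh x * s) = cosh x + s * sinh x := by
    rw [tanh_eq_sinh_div_cosh]
    field_simp [(cosh_pos x).ne']
  rcases hs with rfl | rfl
  · rw [hcosh, mul_one, one_mul, cosh_add_sinh]
  · rw [hcosh, mul_neg_one, neg_one_mul, ← sub_eq_add_neg, cosh_sub_sinh]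

lemma two_pow_card_le_sum_prod_one_add_mul_spin_mul_spin {ι : Type*} [Fintype ι]
    [DecidableEq ι] (A : Finset (ι × ι)) (t : ι × ι → ℝ) (ht : ∀ p ∈ A, 0 ≤ t p) :
    (2 : ℝ) ^ Fintype.card ι ≤
      ∑ τ : ι → Bool, ∏ p ∈ A, (1 + t p * (spin (τ p.1) * spin (τ p.2))) := by
  have hexpand : ∑ τ : ι → Bool, ∏ p ∈ A, (1 + t p * (spin (τ p.1) * spin (τ p.2))) =
      ∑ B ∈ A.powerset, (∏ p ∈ B, t p) * ∑ τ : ι → Bool, ∏ p ∈ B, spin (τ p.1) * spin (τ p.2) := by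
    simp only [prod_one_add, prod_mul_distrib, mul_sum]
    exact sum_comm
  rw [hexpand]
  calc (2 : ℝ) ^ Fintype.card ι
      = (∏ p ∈ (∅ : Finset (ι × ι)), t p) *
          ∑ τ : ι → Bool, ∏ p ∈ (∅ : Finset (ι × ι)), spin (τ p.1) * spin (τ p.2) := by
        simp
    _ ≤ _ := single_le_sum (f := fun B => (∏ p ∈ B, t p) *
          ∑ τ : ι → Bool, ∏ p ∈ B, spin (τ p.1) * spin (τ p.2))
        (fun B hB => mul_nonneg (prod_nonneg fun p hp => ht p (mem_powerset.mp hB hp))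
          (sum_prod_spin_mul_spin_nonneg B))
        (empty_mem_powerset A)

lemma exp_mul_quadForm_eq_prod_cosh_mul_prod {N : ℕ} {J : Matrix (Fin N) (Fin N) ℝ}
    (hJ : J.IsHermitian) (hdiag : ∀ i, J i i = 0) (β : ℝ) (τ : Fin N → Bool) :
    exp (β / 2 * quadForm J τ) =
      (∏ p ∈ univ.filter (fun p : Fin N × Fin N => p.1 < p.2), cosh (β * J p.1 p.2)) *
        ∏ p ∈ univ.filter (fun p : Fin N × Fin N => p.1 < p.2),
          (1 + tanh (β * J p.1 p.2) * (spin (τ p.1) * spin (τ p.2))) := by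
  have hpairs : quadForm J τ = 2 • ∑ p ∈ univ.filter (fun p : Fin N × Fin N => p.1 < p.2),
      J p.1 p.2 * spin (τ p.1) * spin (τ p.2) :=
    sum_sum_eq_two_nsmul_sum_lt _ (fun i j => by rw [← hJ.apply i j, star_trivial]; ring)
      (fun i => by simp [hdiag])
  rw [hpairs, nsmul_eq_mul, Nat.cast_ofNat, ← mul_assoc, div_mul_cancel₀ β two_ne_zero, mul_sum,
    exp_sum, ← prod_mul_distrib]
  refine prod_congr rfl fun p _ => ?_
  rw [← exp_mul_eq_cosh_mul_one_add_tanh_mul (spin_mul_spin_eq_one_or_eq_neg_one _ _)]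
  congr 1
  ring

theorem stmt1 {N : ℕ} (J : Matrix (Fin N) (Fin N) ℝ) (hJ : J.IsHermitian)
    (hdiag : ∀ i, J i i = 0) (hpos : ∀ i j, 0 ≤ J i j)
    (β : ℝ) (hβ : 0 < β) :
    ∑ p ∈ Finset.univ.filter (fun p : Fin N × Fin N => p.1 < p.2),
      Real.log (Real.cosh (β * J p.1 p.2)) ≤ logPartition J β := by
  set P := univ.filter (fun p : Fin N × Fin N => p.1 < p.2)
  have hcosh : 0 < ∏ p ∈ P, cosh (β * J p.1 p.2) := prod_pos fun p _ => cosh_pos _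
  have htanh : ∀ p ∈ P, 0 ≤ tanh (β * J p.1 p.2) := fun p _ => by
    rw [tanh_eq_sinh_div_cosh]
    exact div_nonneg (sinh_nonneg_iff.mpr (mul_nonneg hβ.le (hpos _ _))) (cosh_pos _).le
  have hsum := two_pow_card_le_sum_prod_one_add_mul_spin_mul_spin P _ htanh
  rw [Fintype.card_fin] at hsum
  rw [← log_prod fun p _ => (cosh_pos _).ne', logPartition]
  refine log_le_log hcosh ?_
  simp only [exp_mul_quadForm_eq_prod_cosh_mul_prod hJ hdiag, ← mul_sum]
  calc ∏ p ∈ P, cosh (β * J p.1 p.2)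
      = (2 : ℝ)⁻¹ ^ N * ((∏ p ∈ P, cosh (β * J p.1 p.2)) * 2 ^ N) := by
        rw [mul_left_comm, ← mul_pow, inv_mul_cancel₀ two_ne_zero, one_pow, mul_one]
    _ ≤ _ := by gcongr
end
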